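/- Let T be a pruned tree of sequences and ξ an inductive probability measure on T. Then ξ is free (⨅_{n ∈ ℕ} ξ(x↾n) = 0 for every x ∈ lim T) if and only if Q_ξ is dense in the interval [0,1]. -/

import Mathlib

open scoped ENNReal
open MeasureTheory

noncomputable section

/-- A tree of sequences: a nonempty set of finite lists of naturals closed under prefixes. -/
def IsTree (T : Set (List ℕ)) : Prop :=
  T.Nonempty ∧ ∀ s t : List ℕ, s <+: t → t ∈ T → s ∈ T

/-- `t` is a maximal node of `T`: it has no successor in `T`. -/
def IsMaxNode (T : Set (List ℕ)) (t : List ℕ) : Prop :=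
  ∀ k : ℕ, t ++ [k] ∉ T

/-- A probability tree on `T`. -/
def IsProbTree (T : Set (List ℕ)) (p : List ℕ → ℕ → ℝ≥0∞) : Prop :=
  ∀ t ∈ T, ¬ IsMaxNode T t →
    (∀ k : ℕ, t ++ [k] ∉ T → p t k = 0) ∧ (∑' k : ℕ, p t k = 1)

/-- The measure induced by a probability tree: `Ξ_p(t) = ∏_{i<|t|} p (t↾i) (t i)`. -/
def Xi (p : List ℕ → ℕ → ℝ≥0∞) (t : List ℕ) : ℝ≥0∞ :=
  ∏ i ∈ Finset.range t.length, p (t.take i) (t.getD i 0)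

/-- An inductive probability measure on `T`. -/
def IsIPM (T : Set (List ℕ)) (ξ : List ℕ → ℝ≥0∞) : Prop :=
  ξ [] = 1 ∧ ∀ t ∈ T, ¬ IsMaxNode T t →
    ξ t = ∑' k : {k : ℕ // t ++ [k] ∈ T}, ξ (t ++ [k.1])

/-- The set of infinite branches of `T`. -/
def limT (T : Set (List ℕ)) : Set (ℕ → ℕ) :=
  {x | ∀ n : ℕ, (List.range n).map x ∈ T}

/-- `T` is pruned: every node has a successor in `T`. -/
def Pruned (T : Set (List ℕ)) : Prop := ∀ t ∈ T, ∃ k : ℕ, t ++ [k] ∈ T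

/-- The basic clopen set `[t]` of branches through `t`. -/
def cyl (T : Set (List ℕ)) (t : List ℕ) : Set ↥(limT T) :=
  {x | (List.range t.length).map x.1 = t}

/-- `ξ` is free: all branches have measure (infimum) zero. -/
def FreeIPM (T : Set (List ℕ)) (ξ : List ℕ → ℝ≥0∞) : Prop :=
  ∀ x ∈ limT T, (⨅ n : ℕ, ξ ((List.range n).map x)) = 0

/-- Lexicographic order for lists (of equal length): they first differ at some
index `i < |s|` where `s` is smaller. -/
def lexLt (s t : List ℕ) : Prop :=
  ∃ i : ℕ, i < s.length ∧ s.take i = t.take i ∧ s.getD i 0 < t.getD i 0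

/-- The left endpoint `a_t` of the interval associated to `t`. -/
def aT (T : Set (List ℕ)) (ξ : List ℕ → ℝ≥0∞) (t : List ℕ) : ℝ :=
  (∑' s : {s : List ℕ // s ∈ T ∧ s.length = t.length ∧ lexLt s t}, ξ s.1).toReal

/-- The right endpoint `b_t = a_t + ξ(t)`. -/
def bT (T : Set (List ℕ)) (ξ : List ℕ → ℝ≥0∞) (t : List ℕ) : ℝ :=
  aT T ξ t + (ξ t).toReal

/-- The set of endpoints `Q_ξ`. -/
def Qxi (T : Set (List ℕ)) (ξ : List ℕ → ℝ≥0∞) : Set ℝ :=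
  {y | ∃ t ∈ T, y = aT T ξ t} ∪ {y | ∃ t ∈ T, y = bT T ξ t}

/-!
The nodes of level `n` cut `[0, 1]` into consecutive intervals `[a_t, b_t]`, ordered
lexicographically, and the intervals of the children of `t` tile that of `t`. If `y ∈ [0, 1]`
is at distance `ε > 0` from `Q_ξ`, following the intervals that contain `y` gives a branch `x`
with `ξ(x↾n) = b_{x↾n} - a_{x↾n} ≥ 2ε` for all `n`, so `ξ` is not free. Conversely, if
`ξ(x↾n) ≥ c > 0` along a branch `x`, the nested intervals `[a_{x↾n}, b_{x↾n}]` contain a point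
at distance `≥ c / 2` from `Q_ξ`, because the interval of any other node of level `n` lies
entirely on one side of that of `x↾n`.
-/

lemma List.take_eq_take_of_le {α : Type*} {s t : List α} {i j : ℕ} (hij : i ≤ j)
    (h : s.take j = t.take j) : s.take i = t.take i := by
  simpa [List.take_take, Nat.min_eq_left hij] using congrArg (List.take i) h

lemma List.getD_eq_getD_of_take_eq {α : Type*} {s t : List α} {i j : ℕ} (hij : i < j)
    (h : s.take j = t.take j) (d : α) : s.getD i d = t.getD i d := by
  simpa [List.getD_eq_getElem?_getD, List.getElem?_take, hij] using
    congrArg (fun l => l.getD i d) h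

lemma lexLt_irrefl (t : List ℕ) : ¬ lexLt t t :=
  fun ⟨_, _, _, h⟩ => lt_irrefl _ h

lemma lexLt_trans {r s t : List ℕ} (hrs : lexLt r s) (hst : lexLt s t) : lexLt r t := by
  obtain ⟨i, hi, htake_i, hget_i⟩ := hrs
  obtain ⟨j, hj, htake_j, hget_j⟩ := hst
  rcases lt_trichotomy i j with h | rfl | h
  · exact ⟨i, hi, htake_i.trans (List.take_eq_take_of_le h.le htake_j),
      hget_i.trans_eq (List.getD_eq_getD_of_take_eq h htake_j 0)⟩
  · exact ⟨i, hi, htake_i.trans htake_j, hget_i.trans hget_j⟩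
  · exact ⟨j, h.trans hi, (List.take_eq_take_of_le h.le htake_i).trans htake_j,
      (List.getD_eq_getD_of_take_eq h htake_i 0).trans_lt hget_j⟩

lemma lexLt_or_lexLt_of_ne {s t : List ℕ} (hlen : s.length = t.length) (hne : s ≠ t) :
    lexLt s t ∨ lexLt t s := by
  classical
  have hex : ∃ i, s.getD i 0 ≠ t.getD i 0 := by
    by_contra! h
    exact hne (List.ext_getElem hlen fun i hs ht => by simpa [hs, ht] using h i)
  set i := Nat.find hex
  have hlt : i < s.length := by
    by_contra! h
    exact Nat.find_spec hex
      (by rw [List.getD_eq_default _ _ h, List.getD_eq_default _ _ (hlen ▸ h)])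
  have htake : s.take i = t.take i := List.ext_getElem (by simp [hlen]) fun j hs ht => by
    simp only [List.length_take] at hs
    have hj := (lt_min_iff.1 hs).1
    simpa [List.getD_eq_getElem?_getD, List.getElem?_eq_getElem (hj.trans hlt),
      List.getElem?_eq_getElem (hj.trans (hlen ▸ hlt))] using Nat.find_min hex hj
  rcases lt_or_gt_of_ne (Nat.find_spec hex) with h | h
  · exact .inl ⟨i, hlt, htake, h⟩
  · exact .inr ⟨i, hlen ▸ hlt, htake.symm, h⟩

lemma lexLt_concat_iff {s t : List ℕ} (hlen : s.length = t.length) {m k : ℕ} :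
    lexLt (s ++ [m]) (t ++ [k]) ↔ lexLt s t ∨ s = t ∧ m < k := by
  constructor
  · rintro ⟨i, hi, htake, hget⟩
    simp only [List.length_append, List.length_singleton] at hi
    rcases (Nat.lt_succ_iff.1 hi).lt_or_eq with hi | rfl
    · have hi' : i < t.length := hlen ▸ hi
      refine .inl ⟨i, hi, ?_, ?_⟩
      · rwa [List.take_append_of_le_length hi.le, List.take_append_of_le_length hi'.le] at htake
      · rwa [List.getD_append _ _ _ _ hi, List.getD_append _ _ _ _ hi'] at hget
    · refine .inr ⟨?_, ?_⟩
      · simpa [hlen] using htake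
      · simpa [List.getD_append_right, hlen] using hget
  · rintro (⟨i, hi, htake, hget⟩ | ⟨rfl, hmk⟩)
    · have hi' : i < t.length := hlen ▸ hi
      refine ⟨i, by simp; omega, ?_, ?_⟩
      · rwa [List.take_append_of_le_length hi.le, List.take_append_of_le_length hi'.le]
      · rwa [List.getD_append _ _ _ _ hi, List.getD_append _ _ _ _ hi']
    · exact ⟨s.length, by simp, by simp, by simpa [List.getD_append_right] using hmk⟩

lemma exists_le_and_lt_succ {α : Type*} [LinearOrder α] {f : ℕ → α} {y : α} (h0 : f 0 ≤ y)
    {k : ℕ} (hk : y < f k) : ∃ j, f j ≤ y ∧ y < f (j + 1) := by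
  induction k with
  | zero => exact absurd hk h0.not_gt
  | succ k ih => exact if h : y < f k then ih h else ⟨k, not_lt.1 h, hk⟩

lemma exists_branch {P : List ℕ → Prop} (h0 : P [])
    (hstep : ∀ t, P t → ∃ k, P (t ++ [k])) : ∃ x : ℕ → ℕ, ∀ n, P ((List.range n).map x) := by
  classical
  let next (t : List ℕ) : ℕ := if h : P t then (hstep t h).choose else 0
  let u (n : ℕ) : List ℕ := Nat.rec [] (fun _ t => t ++ [next t]) n
  have hu : ∀ n, P (u n) := fun n => by
    induction n with
    | zero => exact h0
    | succ n ih => simpa [u, next, ih] using (hstep _ ih).choose_spec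
  refine ⟨fun n => next (u n), fun n => ?_⟩
  suffices (List.range n).map (fun n => next (u n)) = u n from this ▸ hu n
  induction n with
  | zero => rfl
  | succ n ih => simp [List.range_succ, ih, u]

lemma Monotone.exists_forall_mem_Icc_add_half_sub_half {a b : ℕ → ℝ} (ha : Monotone a)
    (hb : Antitone b) {c : ℝ} (hab : ∀ n, a n + c ≤ b n) :
    ∃ y, ∀ n, y ∈ Set.Icc (a n + c / 2) (b n - c / 2) := by
  have := Monotone.ciSup_mem_iInter_Icc_of_antitone (f := fun n => a n + c / 2)
    (g := fun n => b n - c / 2) (fun _ _ h => by simpa using ha h)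
    (fun _ _ h => by simpa using hb h) (fun n => by linarith [hab n])
  exact ⟨_, Set.mem_iInter.1 this⟩

def lexBelow (T : Set (List ℕ)) (t : List ℕ) : Set (List ℕ) :=
  {s | s ∈ T ∧ s.length = t.length ∧ lexLt s t}

def leftMass (T : Set (List ℕ)) (ξ : List ℕ → ℝ≥0∞) (t : List ℕ) : ℝ≥0∞ :=
  ∑' s : lexBelow T t, ξ s

def childMass (T : Set (List ℕ)) (ξ : List ℕ → ℝ≥0∞) (t : List ℕ) : ℕ → ℝ≥0∞ :=
  {j | t ++ [j] ∈ T}.indicator fun j => ξ (t ++ [j])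

section

variable {T : Set (List ℕ)} {ξ : List ℕ → ℝ≥0∞}

lemma IsTree.nil_mem (hT : IsTree T) : [] ∈ T :=
  let ⟨t, ht⟩ := hT.1
  hT.2 [] t List.nil_prefix ht

lemma IsTree.mem_of_concat_mem (hT : IsTree T) {t : List ℕ} {k : ℕ} (h : t ++ [k] ∈ T) :
    t ∈ T :=
  hT.2 t _ (List.prefix_append t [k]) h

lemma IsIPM.eq_tsum_childMass (hξ : IsIPM T ξ) (hpr : Pruned T) {t : List ℕ} (ht : t ∈ T) :
    ξ t = ∑' j, childMass T ξ t j := by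
  rw [hξ.2 t ht fun hmax => (hpr t ht).elim hmax, childMass, ← tsum_subtype]
  rfl

lemma leftMass_nil : leftMass T ξ [] = 0 := by
  have : lexBelow T [] = ∅ := Set.eq_empty_of_forall_notMem fun s ⟨_, hlen, i, hi, _⟩ => by
    simp_all
  simp [leftMass, this]

lemma concat_mem_lexBelow_concat_iff (hT : IsTree T) {s t : List ℕ} {m k : ℕ} :
    s ++ [m] ∈ lexBelow T (t ++ [k]) ↔
      s ++ [m] ∈ T ∧ (s ∈ lexBelow T t ∨ s = t ∧ m < k) := by
  simp only [lexBelow, Set.mem_ofPred_eq, List.length_append, List.length_singleton,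
    Nat.add_right_cancel_iff]
  constructor
  · rintro ⟨hmem, hlen, hlt⟩
    exact ⟨hmem, ((lexLt_concat_iff hlen).1 hlt).imp
      (fun h => ⟨hT.mem_of_concat_mem hmem, hlen, h⟩) id⟩
  · rintro ⟨hmem, ⟨_, hlen, hlt⟩ | ⟨rfl, hmk⟩⟩
    · exact ⟨hmem, hlen, (lexLt_concat_iff hlen).2 (.inl hlt)⟩
    · exact ⟨hmem, rfl, (lexLt_concat_iff rfl).2 (.inr ⟨rfl, hmk⟩)⟩

lemma leftMass_concat (hT : IsTree T) (hpr : Pruned T) (hξ : IsIPM T ξ) (t : List ℕ)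
    (k : ℕ) :
    leftMass T ξ (t ++ [k]) = leftMass T ξ t + ∑ j ∈ Finset.range k, childMass T ξ t j := by
  classical
  -- a node of level `|t| + 1` left of `t ++ [k]` is either a child of a node left of `t`
  -- or some `t ++ [j]` with `j < k`
  have hsplit : ∀ s m, (lexBelow T (t ++ [k])).indicator ξ (s ++ [m]) =
      (lexBelow T t).indicator (fun s => childMass T ξ s m) s +
        if s = t then (Finset.range k : Set ℕ).indicator (childMass T ξ t) m else 0 := by
    intro s m
    have hne : s ∈ lexBelow T t → s ≠ t := fun hs hst => lexLt_irrefl t (hst ▸ hs.2.2)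
    by_cases hs : s ∈ lexBelow T t <;> by_cases hst : s = t <;>
      simp_all [Set.indicator_apply, childMass, concat_mem_lexBelow_concat_iff hT, ← ite_and,
        and_comm]
  have hsupp : Function.support ((lexBelow T (t ++ [k])).indicator ξ) ⊆
      Set.range fun p : List ℕ × ℕ => p.1 ++ [p.2] := by
    intro s hs
    have hlen : s.length = t.length + 1 := by
      simpa using (Set.mem_of_indicator_ne_zero hs).2.1
    exact ⟨(s.dropLast, s.getLast (List.ne_nil_of_length_eq_add_one hlen)),
      List.dropLast_append_getLast _⟩
  have hinj : Function.Injective fun p : List ℕ × ℕ => p.1 ++ [p.2] := fun p q h => by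
    obtain ⟨h1, h2⟩ := List.append_inj' h rfl
    exact Prod.ext h1 (List.singleton_inj.1 h2)
  calc leftMass T ξ (t ++ [k])
      = ∑' p : List ℕ × ℕ, (lexBelow T (t ++ [k])).indicator ξ (p.1 ++ [p.2]) := by
        rw [leftMass, tsum_subtype, hinj.tsum_eq hsupp]
    _ = ∑' s, ((lexBelow T t).indicator ξ s +
          if s = t then ∑' m, (Finset.range k : Set ℕ).indicator (childMass T ξ t) m
          else 0) := by
        rw [ENNReal.tsum_prod']
        refine tsum_congr fun s => ?_
        simp only [hsplit, ENNReal.tsum_add]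
        congr 1
        · by_cases hs : s ∈ lexBelow T t
          · simp [hs, hξ.eq_tsum_childMass hpr hs.1]
          · simp [hs]
        · split_ifs <;> simp
    _ = _ := by
        rw [ENNReal.tsum_add, tsum_ite_eq, leftMass, tsum_subtype, sum_eq_tsum_indicator]

lemma leftMass_concat_add (hT : IsTree T) (hpr : Pruned T) (hξ : IsIPM T ξ) {t : List ℕ}
    {k : ℕ} (hk : t ++ [k] ∈ T) :
    leftMass T ξ (t ++ [k]) + ξ (t ++ [k]) =
      leftMass T ξ t + ∑ j ∈ Finset.range (k + 1), childMass T ξ t j := by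
  rw [leftMass_concat hT hpr hξ, Finset.sum_range_succ, add_assoc, childMass,
    Set.indicator_of_mem (s := {j | t ++ [j] ∈ T}) hk]

lemma leftMass_le_leftMass_concat (hT : IsTree T) (hpr : Pruned T) (hξ : IsIPM T ξ)
    (t : List ℕ) (k : ℕ) : leftMass T ξ t ≤ leftMass T ξ (t ++ [k]) := by
  rw [leftMass_concat hT hpr hξ]
  exact le_self_add

lemma leftMass_concat_add_le (hT : IsTree T) (hpr : Pruned T) (hξ : IsIPM T ξ) {t : List ℕ}
    {k : ℕ} (hk : t ++ [k] ∈ T) :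
    leftMass T ξ (t ++ [k]) + ξ (t ++ [k]) ≤ leftMass T ξ t + ξ t := by
  rw [leftMass_concat_add hT hpr hξ hk, hξ.eq_tsum_childMass hpr (hT.mem_of_concat_mem hk)]
  gcongr
  exact ENNReal.sum_le_tsum _

lemma leftMass_add_le_one (hT : IsTree T) (hpr : Pruned T) (hξ : IsIPM T ξ) {t : List ℕ}
    (ht : t ∈ T) : leftMass T ξ t + ξ t ≤ 1 := by
  induction t using List.reverseRecOn with
  | nil => rw [leftMass_nil, hξ.1, zero_add]
  | append_singleton t k ih =>
    exact (leftMass_concat_add_le hT hpr hξ ht).trans (ih (hT.mem_of_concat_mem ht))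

lemma leftMass_add_le_of_lexLt {s t : List ℕ} (hs : s ∈ T) (hlen : s.length = t.length)
    (hst : lexLt s t) : leftMass T ξ s + ξ s ≤ leftMass T ξ t := by
  have hnot : s ∉ lexBelow T s := fun h => lexLt_irrefl s h.2.2
  have hsub : lexBelow T s ∪ {s} ⊆ lexBelow T t := by
    rintro r (⟨hr, hrlen, hrs⟩ | rfl)
    · exact ⟨hr, hrlen.trans hlen, lexLt_trans hrs hst⟩
    · exact ⟨hs, hlen, hst⟩
  calc leftMass T ξ s + ξ s = ∑' r : ↥(lexBelow T s ∪ {s}), ξ r := by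
        rw [ENNReal.summable.tsum_union_disjoint (Set.disjoint_singleton_right.2 hnot)
          ENNReal.summable, tsum_singleton, leftMass]
    _ ≤ leftMass T ξ t := ENNReal.tsum_mono_subtype ξ hsub

lemma exists_concat_mem_Ico_leftMass (hT : IsTree T) (hpr : Pruned T) (hξ : IsIPM T ξ)
    {t : List ℕ} (ht : t ∈ T) {y : ℝ≥0∞}
    (hy : y ∈ Set.Ico (leftMass T ξ t) (leftMass T ξ t + ξ t)) : ∃ k, t ++ [k] ∈ T ∧
      y ∈ Set.Ico (leftMass T ξ (t ++ [k])) (leftMass T ξ (t ++ [k]) + ξ (t ++ [k])) := by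
  -- `f j` is the left end of the interval of the child `t ++ [j]` whenever it is in `T`
  set f : ℕ → ℝ≥0∞ := fun k => leftMass T ξ t + ∑ j ∈ Finset.range k, childMass T ξ t j
  have hsup : leftMass T ξ t + ξ t = ⨆ k, f k := by
    rw [hξ.eq_tsum_childMass hpr ht, ENNReal.tsum_eq_iSup_nat, ENNReal.add_iSup]
  obtain ⟨k, hk⟩ := lt_iSup_iff.1 (hsup ▸ hy.2)
  obtain ⟨j, hjy, hyj⟩ := exists_le_and_lt_succ (f := f) (by simpa [f] using hy.1) hk
  have hj : t ++ [j] ∈ T := by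
    by_contra hj
    have : f (j + 1) = f j := by
      simp [f, Finset.sum_range_succ, childMass,
        Set.indicator_of_notMem (s := {j | t ++ [j] ∈ T}) hj]
    exact (hjy.trans_lt hyj).ne this.symm
  exact ⟨j, hj, by rwa [leftMass_concat hT hpr hξ], by rwa [leftMass_concat_add hT hpr hξ hj]⟩

lemma leftMass_ne_top (hT : IsTree T) (hpr : Pruned T) (hξ : IsIPM T ξ) {t : List ℕ}
    (ht : t ∈ T) : leftMass T ξ t ≠ ⊤ :=
  ne_top_of_le_ne_top ENNReal.one_ne_top (le_self_add.trans (leftMass_add_le_one hT hpr hξ ht))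

lemma IsIPM.ne_top (hT : IsTree T) (hpr : Pruned T) (hξ : IsIPM T ξ) {t : List ℕ}
    (ht : t ∈ T) : ξ t ≠ ⊤ :=
  ne_top_of_le_ne_top ENNReal.one_ne_top (le_add_self.trans (leftMass_add_le_one hT hpr hξ ht))

lemma aT_eq_toReal (t : List ℕ) : aT T ξ t = (leftMass T ξ t).toReal := rfl

lemma bT_eq_toReal (hT : IsTree T) (hpr : Pruned T) (hξ : IsIPM T ξ) {t : List ℕ}
    (ht : t ∈ T) : bT T ξ t = (leftMass T ξ t + ξ t).toReal := by
  rw [bT, aT_eq_toReal, ENNReal.toReal_add (leftMass_ne_top hT hpr hξ ht) (hξ.ne_top hT hpr ht)]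

lemma aT_nil : aT T ξ [] = 0 := by
  rw [aT_eq_toReal, leftMass_nil, ENNReal.toReal_zero]

lemma bT_nil (hξ : IsIPM T ξ) : bT T ξ [] = 1 := by
  rw [bT, aT_nil, hξ.1, ENNReal.toReal_one, zero_add]

lemma aT_mem_Qxi {t : List ℕ} (ht : t ∈ T) : aT T ξ t ∈ Qxi T ξ := .inl ⟨t, ht, rfl⟩

lemma bT_mem_Qxi {t : List ℕ} (ht : t ∈ T) : bT T ξ t ∈ Qxi T ξ := .inr ⟨t, ht, rfl⟩

lemma mem_Ico_aT_bT_iff (hT : IsTree T) (hpr : Pruned T) (hξ : IsIPM T ξ) {t : List ℕ}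
    (ht : t ∈ T) {y : ℝ} (hy : 0 ≤ y) :
    y ∈ Set.Ico (aT T ξ t) (bT T ξ t) ↔
      ENNReal.ofReal y ∈ Set.Ico (leftMass T ξ t) (leftMass T ξ t + ξ t) := by
  rw [Set.mem_Ico, Set.mem_Ico, ENNReal.le_ofReal_iff_toReal_le (leftMass_ne_top hT hpr hξ ht) hy,
    ENNReal.ofReal_lt_iff_lt_toReal hy
      (ENNReal.add_ne_top.2 ⟨leftMass_ne_top hT hpr hξ ht, hξ.ne_top hT hpr ht⟩),
    aT_eq_toReal, bT_eq_toReal hT hpr hξ ht]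

lemma exists_concat_mem_Ico_aT_bT (hT : IsTree T) (hpr : Pruned T) (hξ : IsIPM T ξ)
    {t : List ℕ} (ht : t ∈ T) {y : ℝ} (hy : y ∈ Set.Ico (aT T ξ t) (bT T ξ t)) :
    ∃ k, t ++ [k] ∈ T ∧ y ∈ Set.Ico (aT T ξ (t ++ [k])) (bT T ξ (t ++ [k])) := by
  have hy0 : 0 ≤ y := ENNReal.toReal_nonneg.trans hy.1
  obtain ⟨k, hk, hyk⟩ := exists_concat_mem_Ico_leftMass hT hpr hξ ht
    ((mem_Ico_aT_bT_iff hT hpr hξ ht hy0).1 hy)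
  exact ⟨k, hk, (mem_Ico_aT_bT_iff hT hpr hξ hk hy0).2 hyk⟩

lemma aT_le_aT_concat (hT : IsTree T) (hpr : Pruned T) (hξ : IsIPM T ξ) {t : List ℕ} {k : ℕ}
    (hk : t ++ [k] ∈ T) : aT T ξ t ≤ aT T ξ (t ++ [k]) :=
  ENNReal.toReal_mono (leftMass_ne_top hT hpr hξ hk) (leftMass_le_leftMass_concat hT hpr hξ t k)

lemma bT_concat_le_bT (hT : IsTree T) (hpr : Pruned T) (hξ : IsIPM T ξ) {t : List ℕ} {k : ℕ}
    (hk : t ++ [k] ∈ T) : bT T ξ (t ++ [k]) ≤ bT T ξ t := by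
  have ht := hT.mem_of_concat_mem hk
  rw [bT_eq_toReal hT hpr hξ hk, bT_eq_toReal hT hpr hξ ht]
  exact ENNReal.toReal_mono
    (ENNReal.add_ne_top.2 ⟨leftMass_ne_top hT hpr hξ ht, hξ.ne_top hT hpr ht⟩)
    (leftMass_concat_add_le hT hpr hξ hk)

lemma bT_le_aT_of_lexLt (hT : IsTree T) (hpr : Pruned T) (hξ : IsIPM T ξ) {s t : List ℕ}
    (hs : s ∈ T) (ht : t ∈ T) (hlen : s.length = t.length) (hst : lexLt s t) :
    bT T ξ s ≤ aT T ξ t := by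
  rw [bT_eq_toReal hT hpr hξ hs]
  exact ENNReal.toReal_mono (leftMass_ne_top hT hpr hξ ht) (leftMass_add_le_of_lexLt hs hlen hst)

lemma exists_le_aT_or_bT_le_of_mem_Qxi (hT : IsTree T) (hpr : Pruned T) (hξ : IsIPM T ξ)
    {x : ℕ → ℕ} (hx : x ∈ limT T) {q : ℝ} (hq : q ∈ Qxi T ξ) :
    ∃ n, q ≤ aT T ξ ((List.range n).map x) ∨ bT T ξ ((List.range n).map x) ≤ q := by
  obtain ⟨s, hs, hqs⟩ : ∃ s ∈ T, q = aT T ξ s ∨ q = bT T ξ s := by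
    rcases hq with ⟨s, hs, rfl⟩ | ⟨s, hs, rfl⟩
    exacts [⟨s, hs, .inl rfl⟩, ⟨s, hs, .inr rfl⟩]
  refine ⟨s.length, ?_⟩
  set u := (List.range s.length).map x
  have hu : u ∈ T := hx s.length
  have hlen : s.length = u.length := by simp [u]
  have hab : aT T ξ s ≤ bT T ξ s := le_add_of_nonneg_right ENNReal.toReal_nonneg
  by_cases hsu : s = u
  · rw [← hsu]
    rcases hqs with rfl | rfl
    exacts [.inl le_rfl, .inr le_rfl]
  rcases lexLt_or_lexLt_of_ne hlen hsu with hlt | hlt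
  · have := bT_le_aT_of_lexLt hT hpr hξ hs hu hlen hlt
    exact .inl (by rcases hqs with rfl | rfl <;> linarith)
  · have := bT_le_aT_of_lexLt hT hpr hξ hu hs hlen.symm hlt
    exact .inr (by rcases hqs with rfl | rfl <;> linarith)

lemma Icc_subset_closure_Qxi_of_freeIPM (hT : IsTree T) (hpr : Pruned T) (hξ : IsIPM T ξ)
    (hfree : FreeIPM T ξ) : Set.Icc (0 : ℝ) 1 ⊆ closure (Qxi T ξ) := by
  intro y hy
  by_contra hy_not
  obtain ⟨ε, hε, hfar⟩ : ∃ ε > 0, ∀ q ∈ Qxi T ξ, ε ≤ |y - q| := by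
    simpa [Metric.mem_closure_iff, Real.dist_eq] using hy_not
  have hy1 : y < 1 := hy.2.lt_of_ne fun h => by
    simpa [h, bT_nil hξ, hε.not_ge] using hfar _ (bT_mem_Qxi (ξ := ξ) hT.nil_mem)
  obtain ⟨x, hx⟩ := exists_branch (P := fun t => t ∈ T ∧ y ∈ Set.Ico (aT T ξ t) (bT T ξ t))
    ⟨hT.nil_mem, by rw [aT_nil, bT_nil hξ]; exact ⟨hy.1, hy1⟩⟩
    fun t ⟨ht, hyt⟩ => exists_concat_mem_Ico_aT_bT hT hpr hξ ht hyt
  have hgap : ∀ n, ENNReal.ofReal (2 * ε) ≤ ξ ((List.range n).map x) := fun n => by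
    obtain ⟨hn, ha, hb⟩ := hx n
    have h1 := hfar _ (aT_mem_Qxi hn)
    have h2 := hfar _ (bT_mem_Qxi hn)
    rw [abs_of_nonneg (sub_nonneg.2 ha)] at h1
    rw [abs_of_neg (sub_neg.2 hb)] at h2
    rw [ENNReal.ofReal_le_iff_le_toReal (hξ.ne_top hT hpr hn)]
    rw [bT] at hb h2
    linarith
  have hinf := le_iInf hgap
  rw [hfree x fun n => (hx n).1] at hinf
  exact (ENNReal.ofReal_pos.2 (by positivity)).not_ge hinf

lemma freeIPM_of_Icc_subset_closure_Qxi (hT : IsTree T) (hpr : Pruned T) (hξ : IsIPM T ξ)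
    (hdense : Set.Icc (0 : ℝ) 1 ⊆ closure (Qxi T ξ)) : FreeIPM T ξ := by
  intro x hx
  by_contra hinf
  set c := (⨅ n, ξ ((List.range n).map x)).toReal
  have hc : 0 < c := ENNReal.toReal_pos hinf
    (ne_top_of_le_ne_top (hξ.ne_top hT hpr hT.nil_mem) (iInf_le _ 0))
  set a : ℕ → ℝ := fun n => aT T ξ ((List.range n).map x)
  set b : ℕ → ℝ := fun n => bT T ξ ((List.range n).map x)
  have hsucc : ∀ n, (List.range (n + 1)).map x = (List.range n).map x ++ [x n] := by
    simp [List.range_succ]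
  have ha : Monotone a := monotone_nat_of_le_succ fun n => by
    simpa only [a, hsucc] using aT_le_aT_concat hT hpr hξ (hsucc n ▸ hx (n + 1))
  have hb : Antitone b := antitone_nat_of_succ_le fun n => by
    simpa only [b, hsucc] using bT_concat_le_bT hT hpr hξ (hsucc n ▸ hx (n + 1))
  have hab : ∀ n, a n + c ≤ b n := fun n => by
    simp only [a, b, bT]
    gcongr
    exact ENNReal.toReal_mono (hξ.ne_top hT hpr (hx n)) (iInf_le _ n)
  obtain ⟨y, hy⟩ := ha.exists_forall_mem_Icc_add_half_sub_half hb hab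
  have ha0 : a 0 = 0 := aT_nil
  have hb0 : b 0 = 1 := bT_nil hξ
  have hy01 : y ∈ Set.Icc (0 : ℝ) 1 := ⟨by linarith [(hy 0).1], by linarith [(hy 0).2]⟩
  obtain ⟨q, hq, hdist⟩ := Metric.mem_closure_iff.1 (hdense hy01) (c / 2) (by positivity)
  rw [Real.dist_eq, abs_lt] at hdist
  obtain ⟨n, hn | hn⟩ := exists_le_aT_or_bT_le_of_mem_Qxi hT hpr hξ hx hq
  · linarith [(hy n).1]
  · linarith [(hy n).2]

end

theorem stmt14 (T : Set (List ℕ)) (ξ : List ℕ → ℝ≥0∞)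
    (hT : IsTree T) (hpr : Pruned T) (hξ : IsIPM T ξ) :
    FreeIPM T ξ ↔ Set.Icc (0 : ℝ) 1 ⊆ closure (Qxi T ξ) :=
  ⟨Icc_subset_closure_Qxi_of_freeIPM hT hpr hξ, freeIPM_of_Icc_subset_closure_Qxi hT hpr hξ⟩
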